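/- arXiv:2605.22867 — 3 statements merged into one kernel-verified Lean document; each statement's English description precedes it below -/
import Mathlib

section
/- Suppose Γ is ω-clique regular with eigenvalues of its line graph L(Γ) equal to μ_1 ≤ ... ≤ μ_M. Then every eigenvalue λ of the ω-clique graph C_ω(Γ) satisfies (ω/(ω−1))(μ_1/2 − ω + 2) ≤ λ ≤ (ω/(ω−1))(μ_M/2 − ω + 2). -/
open SimpleGraph

/-- A graph is `ω`-clique regular if its edge set is nonempty and every edge lies in a
unique clique of order `ω`. -/
def IsCliqueRegular {V : Type*} (G : SimpleGraph V) (ω : ℕ) : Prop :=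
  G.edgeSet.Nonempty ∧
    ∀ ⦃x y : V⦄, G.Adj x y → ∃! s : Finset V, G.IsNClique ω s ∧ x ∈ s ∧ y ∈ s

/-- The `ω`-clique graph: vertices are the `ω`-cliques of `G`, two distinct cliques
adjacent iff they have nonempty intersection. -/
def cliqueGraph {V : Type*} [DecidableEq V] (G : SimpleGraph V) (ω : ℕ) :
    SimpleGraph {s : Finset V // G.IsNClique ω s} where
  Adj a b := a ≠ b ∧ (a.val ∩ b.val).Nonempty
  symm := ⟨fun a b => by
    rintro ⟨h1, h2⟩
    exact ⟨h1.symm, by rwa [Finset.inter_comm]⟩⟩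
  loopless := ⟨fun a => by simp⟩

instance {V : Type*} [DecidableEq V] (G : SimpleGraph V) (ω : ℕ) :
    DecidableRel (cliqueGraph G ω).Adj :=
  fun a b => inferInstanceAs (Decidable (a ≠ b ∧ (a.val ∩ b.val).Nonempty))

instance lineGraphAdjDecidable {V : Type*} [Fintype V] [DecidableEq V]
    (G : SimpleGraph V) : DecidableRel (G.lineGraph).Adj :=
  fun e f =>
    decidable_of_iff (e ≠ f ∧ ∃ v, v ∈ (e : Sym2 V) ∧ v ∈ (f : Sym2 V))
      (SimpleGraph.lineGraph_adj_iff_exists).symm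

/-!
Let `N`, `B`, `M` be the incidence matrices of ω-cliques against edges, edges against vertices and
ω-cliques against vertices. Then `B Bᵀ = A(L(Γ)) + 2I` and `N B = (ω - 1) M`, and since distinct
ω-cliques of an ω-clique regular graph share at most one vertex (hence no edge),
`M Mᵀ = A(C_ω(Γ)) + ωI` and `N Nᵀ = (ω choose 2) I`. Together,
`N A(L(Γ)) Nᵀ = (ω - 1)² A(C_ω(Γ)) + ω(ω - 1)(ω - 2) I`.
For an eigenvector `x` of `A(C_ω(Γ))` with eigenvalue `λ`, the Rayleigh quotient of `A(L(Γ))` at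
`Nᵀ x` is therefore `((ω - 1)² λ + ω(ω - 1)(ω - 2)) / (ω choose 2)`, which lies in `[μ₁, μ_M]`.
-/

namespace Matrix

variable {n : Type*} [Fintype n] [DecidableEq n]

theorem exists_mulVec_eq_smul_of_mem_spectrum {K : Type*} [Field K] {A : Matrix n n K} {lam : K}
    (h : lam ∈ spectrum K A) : ∃ x ≠ 0, A *ᵥ x = lam • x := by
  rw [← spectrum_toLin', ← Module.End.hasEigenvalue_iff_mem_spectrum] at h
  obtain ⟨x, hx⟩ := h.exists_hasEigenvector
  exact ⟨x, hx.2, by simpa using hx.apply_eq_smul⟩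

theorem IsHermitian.dotProduct_mulVec_le {A : Matrix n n ℝ} (hA : A.IsHermitian) {μ : ℝ}
    (hμ : ∀ t ∈ spectrum ℝ A, t ≤ μ) (x : n → ℝ) : x ⬝ᵥ A *ᵥ x ≤ μ * (x ⬝ᵥ x) := by
  have hP : (algebraMap ℝ _ μ - A).IsHermitian := by
    simpa [IsHermitian, Algebra.algebraMap_eq_smul_one] using hA
  have hPsd : (algebraMap ℝ _ μ - A).PosSemidef := by
    refine hP.posSemidef_iff_eigenvalues_nonneg.mpr fun i => ?_
    have hmem := hP.eigenvalues_mem_spectrum_real i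
    rw [← spectrum.singleton_sub_eq] at hmem
    obtain ⟨_, rfl, t, ht, hti⟩ := hmem
    simpa [← hti] using hμ t ht
  have := hPsd.dotProduct_mulVec_nonneg x
  simp only [star_trivial, sub_mulVec, dotProduct_sub, Algebra.algebraMap_eq_smul_one, smul_mulVec,
    one_mulVec, dotProduct_smul, smul_eq_mul] at this
  linarith

theorem IsHermitian.le_dotProduct_mulVec {A : Matrix n n ℝ} (hA : A.IsHermitian) {μ : ℝ}
    (hμ : ∀ t ∈ spectrum ℝ A, μ ≤ t) (x : n → ℝ) : μ * (x ⬝ᵥ x) ≤ x ⬝ᵥ A *ᵥ x := by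
  have := hA.neg.dotProduct_mulVec_le (μ := -μ) (x := x) fun t ht => by
    rw [← spectrum.neg_eq] at ht
    linarith [hμ (-t) ht]
  simp only [neg_mulVec, dotProduct_neg] at this
  linarith

theorem IsHermitian.spectrum_bounds_of_mul_mul_transpose {m : Type*} [Fintype m] [DecidableEq m]
    {A : Matrix n n ℝ} (hA : A.IsHermitian) {N : Matrix m n ℝ} {B : Matrix m m ℝ}
    {a b c μ₁ μM lam : ℝ} (hNN : N * Nᵀ = c • 1) (hNAN : N * A * Nᵀ = a • B + b • 1)
    (hmin : ∀ t ∈ spectrum ℝ A, μ₁ ≤ t) (hmax : ∀ t ∈ spectrum ℝ A, t ≤ μM)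
    (hlam : lam ∈ spectrum ℝ B) : c * μ₁ ≤ a * lam + b ∧ a * lam + b ≤ c * μM := by
  obtain ⟨x, hx0, hx⟩ := exists_mulVec_eq_smul_of_mem_spectrum hlam
  have hxx : 0 < x ⬝ᵥ x := by simpa using dotProduct_self_star_pos_iff.mpr hx0
  have hconj (P : Matrix n n ℝ) : (Nᵀ *ᵥ x) ⬝ᵥ P *ᵥ (Nᵀ *ᵥ x) = x ⬝ᵥ (N * P * Nᵀ) *ᵥ x := by
    rw [← mulVec_mulVec, ← mulVec_mulVec, dotProduct_mulVec x N, ← mulVec_transpose]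
  have hyy : (Nᵀ *ᵥ x) ⬝ᵥ (Nᵀ *ᵥ x) = c * (x ⬝ᵥ x) := by
    simpa [hNN, smul_mulVec] using hconj 1
  have hyAy : (Nᵀ *ᵥ x) ⬝ᵥ A *ᵥ (Nᵀ *ᵥ x) = (a * lam + b) * (x ⬝ᵥ x) := by
    rw [hconj, hNAN, add_mulVec, smul_mulVec, smul_mulVec, hx, one_mulVec]
    simp only [dotProduct_add, dotProduct_smul, smul_eq_mul]
    ring
  have hlo := hA.le_dotProduct_mulVec hmin (Nᵀ *ᵥ x)
  have hhi := hA.dotProduct_mulVec_le hmax (Nᵀ *ᵥ x)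
  rw [hyy, hyAy] at hlo hhi
  exact ⟨le_of_mul_le_mul_right (by linarith) hxx, le_of_mul_le_mul_right (by linarith) hxx⟩

end Matrix

open Finset Matrix

def incidenceMatrix {ι κ : Type*} (R : Type*) [Zero R] [One R] (r : ι → κ → Prop)
    [∀ i k, Decidable (r i k)] : Matrix ι κ R :=
  Matrix.of fun i k => if r i k then 1 else 0

section incidenceMatrix

variable {ι κ ν R : Type*} [Fintype κ] [NonAssocSemiring R]

theorem incidenceMatrix_mul_apply (r : ι → κ → Prop) (s : κ → ν → Prop) [∀ i k, Decidable (r i k)]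
    [∀ k j, Decidable (s k j)] (i : ι) (j : ν) :
    (incidenceMatrix R r * incidenceMatrix R s) i j = #{k | r i k ∧ s k j} := by
  simp only [incidenceMatrix, Matrix.mul_apply, Matrix.of_apply, ite_zero_mul_ite_zero, mul_one,
    Finset.sum_boole]

theorem incidenceMatrix_mul_transpose_apply (r : ι → κ → Prop) (s : ν → κ → Prop)
    [∀ i k, Decidable (r i k)] [∀ j k, Decidable (s j k)] (i : ι) (j : ν) :
    (incidenceMatrix R r * (incidenceMatrix R s)ᵀ) i j = #{k | r i k ∧ s j k} := by
  simp only [incidenceMatrix, Matrix.mul_apply, Matrix.transpose_apply, Matrix.of_apply,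
    ite_zero_mul_ite_zero, mul_one, Finset.sum_boole]

end incidenceMatrix

theorem Finset.cast_card_eq_ite_nonempty {α R : Type*} [AddMonoidWithOne R] {t : Finset α}
    (h : #t ≤ 1) : (#t : R) = if t.Nonempty then 1 else 0 := by
  split_ifs with ht
  · rw [le_antisymm h ht.card_pos, Nat.cast_one]
  · simp [not_nonempty_iff_eq_empty.mp ht]

namespace SimpleGraph

variable {V : Type*} {G : SimpleGraph V} {ω : ℕ}

theorem IsCliqueRegular.two_le (hcr : IsCliqueRegular G ω) : 2 ≤ ω := by
  obtain ⟨⟨e, he⟩, huniq⟩ := hcr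
  induction e with | _ x y =>
  obtain ⟨s, ⟨hs, hx, hy⟩, -⟩ := huniq he
  rw [← hs.card_eq]
  exact one_lt_card.mpr ⟨x, hx, y, hy, G.ne_of_adj he⟩

variable [DecidableEq V]

theorem IsCliqueRegular.card_inter_le_one (hcr : IsCliqueRegular G ω) {s t : Finset V}
    (hs : G.IsNClique ω s) (ht : G.IsNClique ω t) (hst : s ≠ t) : #(s ∩ t) ≤ 1 := by
  refine card_le_one.mpr fun x hx y hy => by_contra fun hxy => hst ?_
  rw [mem_inter] at hx hy
  obtain ⟨u, -, hu⟩ := hcr.2 (hs.isClique hx.1 hy.1 hxy)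
  exact (hu s ⟨hs, hx.1, hy.1⟩).trans (hu t ⟨ht, hx.2, hy.2⟩).symm

variable [Fintype V]

variable (G ω) in
def cliqueEdgeIncidence : Matrix {s : Finset V // G.IsNClique ω s} G.edgeSet ℝ :=
  incidenceMatrix ℝ fun C e => (e : Sym2 V) ∈ C.1.sym2

variable (G) in
def edgeVertexIncidence : Matrix G.edgeSet V ℝ :=
  incidenceMatrix ℝ fun e v => v ∈ (e : Sym2 V)

variable (G ω) in
def cliqueVertexIncidence : Matrix {s : Finset V // G.IsNClique ω s} V ℝ :=
  incidenceMatrix ℝ fun C v => v ∈ C.1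

theorem edgeVertexIncidence_mul_transpose :
    edgeVertexIncidence G * (edgeVertexIncidence G)ᵀ = G.lineGraph.adjMatrix ℝ + (2 : ℝ) • 1 := by
  ext e f
  rw [edgeVertexIncidence, incidenceMatrix_mul_transpose_apply]
  simp only [Matrix.add_apply, adjMatrix_apply, Matrix.smul_apply, one_apply, smul_eq_mul]
  obtain rfl | hef := eq_or_ne e f
  · obtain ⟨e, he⟩ := e
    induction e with | _ x y =>
    simp [Sym2.mem_iff, filter_or, filter_eq', card_pair (G.ne_of_adj he)]
  · have hle : #{v | v ∈ (e : Sym2 V) ∧ v ∈ (f : Sym2 V)} ≤ 1 :=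
      card_le_one.mpr fun x hx y hy => by_contra fun hxy => hef <| Subtype.ext <|
        Sym2.eq_of_ne_mem hxy (mem_filter.mp hx).2.1 (mem_filter.mp hy).2.1
          (mem_filter.mp hx).2.2 (mem_filter.mp hy).2.2
    rw [cast_card_eq_ite_nonempty hle]
    simp [hef, lineGraph_adj_iff_exists, Finset.Nonempty]

theorem cliqueVertexIncidence_mul_transpose (hcr : IsCliqueRegular G ω) :
    cliqueVertexIncidence G ω * (cliqueVertexIncidence G ω)ᵀ =
      (cliqueGraph G ω).adjMatrix ℝ + (ω : ℝ) • 1 := by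
  ext C D
  rw [cliqueVertexIncidence, incidenceMatrix_mul_transpose_apply]
  simp only [Matrix.add_apply, adjMatrix_apply, Matrix.smul_apply, one_apply, smul_eq_mul]
  have hinter : ({v | v ∈ C.1 ∧ v ∈ D.1} : Finset V) = C.1 ∩ D.1 := by ext; simp
  rw [hinter]
  obtain rfl | hCD := eq_or_ne C D
  · simp [C.2.card_eq]
  · rw [cast_card_eq_ite_nonempty (hcr.card_inter_le_one C.2 D.2 (Subtype.coe_ne_coe.mpr hCD))]
    simp [cliqueGraph, hCD]

variable [DecidableRel G.Adj]

theorem IsClique.card_edgeSet_mem_sym2 {s : Finset V} (hs : G.IsClique s) :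
    #{e : G.edgeSet | (e : Sym2 V) ∈ s.sym2} = (#s).choose 2 := by
  rw [← Sym2.card_image_offDiag]
  refine card_bij (fun e _ => e.val) (fun ⟨e, he⟩ hes => ?_) (fun _ _ _ _ => Subtype.ext) ?_
  · induction e with | _ x y =>
    obtain ⟨hx, hy⟩ := mk_mem_sym2_iff.mp (mem_filter.mp hes).2
    exact mem_image.mpr ⟨(x, y), mem_offDiag.mpr ⟨hx, hy, G.ne_of_adj he⟩, rfl⟩
  · simp only [mem_image, mem_offDiag, mem_filter, mem_univ, true_and]
    rintro _ ⟨⟨x, y⟩, ⟨hx, hy, hxy⟩, rfl⟩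
    exact ⟨⟨s(x, y), hs hx hy hxy⟩, mk_mem_sym2_iff.mpr ⟨hx, hy⟩, rfl⟩

theorem IsClique.card_edgeSet_mem_sym2_and_mem {s : Finset V} (hs : G.IsClique s) {v : V}
    (hv : v ∈ s) :
    #{e : G.edgeSet | (e : Sym2 V) ∈ s.sym2 ∧ v ∈ (e : Sym2 V)} = #s - 1 := by
  rw [← card_erase_of_mem hv]
  symm
  refine card_bij (fun w hw => ⟨s(v, w), hs hv (mem_of_mem_erase hw) (ne_of_mem_erase hw).symm⟩)
    (fun w hw => ?_) (fun _ _ _ _ h => Sym2.congr_right.mp (congrArg Subtype.val h)) ?_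
  · simpa [hv] using mem_of_mem_erase hw
  · rintro ⟨e, he⟩ hes
    obtain ⟨hes, hve⟩ := (mem_filter.mp hes).2
    obtain ⟨w, rfl⟩ := Sym2.mem_iff_exists.mp hve
    obtain ⟨-, hw⟩ := mk_mem_sym2_iff.mp hes
    exact ⟨w, mem_erase.mpr ⟨(G.ne_of_adj he).symm, hw⟩, rfl⟩

theorem cliqueEdgeIncidence_mul_edgeVertexIncidence :
    cliqueEdgeIncidence G ω * edgeVertexIncidence G =
      ((ω : ℝ) - 1) • cliqueVertexIncidence G ω := by
  ext C v
  rw [cliqueEdgeIncidence, edgeVertexIncidence, incidenceMatrix_mul_apply, cliqueVertexIncidence]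
  simp only [Matrix.smul_apply, incidenceMatrix, of_apply, smul_eq_mul]
  by_cases hv : v ∈ C.1
  · rw [C.2.isClique.card_edgeSet_mem_sym2_and_mem hv, C.2.card_eq,
      Nat.cast_sub (C.2.card_eq ▸ card_pos.mpr ⟨v, hv⟩)]
    simp [hv]
  · simp only [hv, if_false, mul_zero, Nat.cast_eq_zero, card_eq_zero, filter_eq_empty_iff]
    exact fun e _ ⟨he, hve⟩ => hv (mem_sym2_iff.mp he v hve)

theorem cliqueEdgeIncidence_mul_transpose (hcr : IsCliqueRegular G ω) :
    cliqueEdgeIncidence G ω * (cliqueEdgeIncidence G ω)ᵀ = ((ω.choose 2 : ℕ) : ℝ) • 1 := by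
  ext C D
  rw [cliqueEdgeIncidence, incidenceMatrix_mul_transpose_apply]
  simp only [Matrix.smul_apply, one_apply, smul_eq_mul]
  obtain rfl | hCD := eq_or_ne C D
  · simp only [and_self, if_true, mul_one]
    rw [C.2.isClique.card_edgeSet_mem_sym2, C.2.card_eq]
  · simp only [hCD, if_false, mul_zero, Nat.cast_eq_zero, card_eq_zero, filter_eq_empty_iff]
    rintro ⟨e, he⟩ - ⟨heC, heD⟩
    induction e with | _ x y =>
    rw [mk_mem_sym2_iff] at heC heD
    exact (one_lt_card.mpr ⟨x, mem_inter.mpr ⟨heC.1, heD.1⟩, y, mem_inter.mpr ⟨heC.2, heD.2⟩,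
      G.ne_of_adj he⟩).not_ge (hcr.card_inter_le_one C.2 D.2 (Subtype.coe_ne_coe.mpr hCD))

theorem cliqueEdgeIncidence_mul_adjMatrix_lineGraph_mul_transpose (hcr : IsCliqueRegular G ω) :
    cliqueEdgeIncidence G ω * G.lineGraph.adjMatrix ℝ * (cliqueEdgeIncidence G ω)ᵀ =
      ((ω : ℝ) - 1) ^ 2 • (cliqueGraph G ω).adjMatrix ℝ + ((ω : ℝ) * (ω - 1) * (ω - 2)) • 1 := by
  set N := cliqueEdgeIncidence G ω
  set B := edgeVertexIncidence G
  have hA : G.lineGraph.adjMatrix ℝ = B * Bᵀ - (2 : ℝ) • 1 :=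
    eq_sub_of_add_eq edgeVertexIncidence_mul_transpose.symm
  have hNBBN : N * (B * Bᵀ) * Nᵀ = (N * B) * (N * B)ᵀ := by
    simp only [transpose_mul, Matrix.mul_assoc]
  rw [hA, Matrix.mul_sub, Matrix.sub_mul, hNBBN, cliqueEdgeIncidence_mul_edgeVertexIncidence,
    transpose_smul, Matrix.smul_mul, Matrix.mul_smul, cliqueVertexIncidence_mul_transpose hcr,
    Matrix.mul_smul, Matrix.mul_one, Matrix.smul_mul, cliqueEdgeIncidence_mul_transpose hcr,
    Nat.cast_choose_two]
  module

end SimpleGraph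

theorem stmt11_general {V : Type*} [Fintype V] [DecidableEq V] (G : SimpleGraph V)
    [DecidableRel G.Adj] (ω : ℕ) (hcr : IsCliqueRegular G ω)
    (μ₁ μM : ℝ)
    (h1min : ∀ μ ∈ spectrum ℝ ((G.lineGraph).adjMatrix ℝ), μ₁ ≤ μ)
    (hMmax : ∀ μ ∈ spectrum ℝ ((G.lineGraph).adjMatrix ℝ), μ ≤ μM) :
    ∀ lam ∈ spectrum ℝ (((cliqueGraph G ω)).adjMatrix ℝ),
      ((ω : ℝ) / ((ω : ℝ) - 1)) * (μ₁ / 2 - (ω : ℝ) + 2) ≤ lam ∧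
        lam ≤ ((ω : ℝ) / ((ω : ℝ) - 1)) * (μM / 2 - (ω : ℝ) + 2) := by
  intro lam hlam
  obtain ⟨hlo, hhi⟩ := (isHermitian_adjMatrix ℝ G.lineGraph).spectrum_bounds_of_mul_mul_transpose
    (cliqueEdgeIncidence_mul_transpose hcr)
    (cliqueEdgeIncidence_mul_adjMatrix_lineGraph_mul_transpose hcr) h1min hMmax hlam
  rw [Nat.cast_choose_two] at hlo hhi
  have hω : (0 : ℝ) < ω - 1 := by
    have : (2 : ℝ) ≤ ω := by exact_mod_cast hcr.two_le
    linarith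
  rw [div_mul_eq_mul_div, div_le_iff₀ hω, div_mul_eq_mul_div, le_div_iff₀ hω]
  constructor <;> nlinarith

/-- Eigenvalue bounds for `C_ω(Γ)` in terms of the extreme eigenvalues of `L(Γ)`. -/
theorem stmt11 {V : Type*} [Fintype V] [DecidableEq V] (G : SimpleGraph V)
    [DecidableRel G.Adj] (ω : ℕ) (hcr : IsCliqueRegular G ω)
    (μ₁ μM : ℝ)
    (h1mem : μ₁ ∈ spectrum ℝ ((G.lineGraph).adjMatrix ℝ))
    (h1min : ∀ μ ∈ spectrum ℝ ((G.lineGraph).adjMatrix ℝ), μ₁ ≤ μ)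
    (hMmem : μM ∈ spectrum ℝ ((G.lineGraph).adjMatrix ℝ))
    (hMmax : ∀ μ ∈ spectrum ℝ ((G.lineGraph).adjMatrix ℝ), μ ≤ μM) :
    ∀ lam ∈ spectrum ℝ (((cliqueGraph G ω)).adjMatrix ℝ),
      ((ω : ℝ) / ((ω : ℝ) - 1)) * (μ₁ / 2 - (ω : ℝ) + 2) ≤ lam ∧
        lam ≤ ((ω : ℝ) / ((ω : ℝ) - 1)) * (μM / 2 - (ω : ℝ) + 2) :=
  stmt11_general G ω hcr μ₁ μM h1min hMmax
end

section
/- If Γ is ω-clique regular, then every eigenvalue λ of C_ω(Γ) satisfies −ω ≤ λ ≤ ω(Δ(Γ)/(ω−1) − 1), where Δ(Γ) is the maximum degree of Γ. -/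
open SimpleGraph

/-!
The lower bound is the Gram-matrix argument for line graphs: if `N` is the clique–vertex
incidence matrix, then `N Nᵀ = ω I + A`, because two distinct `ω`-cliques of a clique
regular graph share at most one vertex (two common vertices span an edge, which lies in a
unique `ω`-clique). Hence `ω I + A` is positive semidefinite and `λ ≥ -ω`.

The upper bound is `λ ≤ Δ(C_ω(Γ))`. The neighbours of a clique `s` are among the other
cliques through its `ω` vertices, and the cliques through a vertex `v` partition its
neighbourhood into blocks of size `ω - 1`, so there are at most `Δ(Γ)/(ω - 1)` of them, and `deg s ≤ ω (Δ(Γ)/(ω - 1) - 1)`.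
-/
open Finset Matrix

lemma Matrix.exists_mulVec_eq_smul_of_mem_spectrum_s12 {n K : Type*} [Fintype n] [DecidableEq n]
    [Field K] {A : Matrix n n K} {μ : K} (hμ : μ ∈ spectrum K A) :
    ∃ x ≠ 0, A *ᵥ x = μ • x := by
  rw [← Matrix.spectrum_toLin', ← Module.End.hasEigenvalue_iff_mem_spectrum] at hμ
  obtain ⟨x, hx⟩ := hμ.exists_hasEigenvector
  exact ⟨x, hx.2, by simpa using hx.apply_eq_smul⟩

lemma Matrix.neg_le_of_posSemidef_algebraMap_add {n : Type*} [Fintype n] [DecidableEq n]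
    {A : Matrix n n ℝ} {c μ : ℝ} (hA : (algebraMap ℝ (Matrix n n ℝ) c + A).PosSemidef)
    (hμ : μ ∈ spectrum ℝ A) : -c ≤ μ := by
  rw [← spectrum.add_mem_add_iff (s := c)] at hμ
  have := (posSemidef_iff_isHermitian_and_spectrum_nonneg.1 hA).2 hμ
  simp only [Set.mem_ofPred_eq] at this
  linarith

lemma SimpleGraph.exists_abs_le_degree_of_mem_spectrum {W : Type*} [Fintype W] [DecidableEq W]
    (H : SimpleGraph W) [DecidableRel H.Adj] {μ : ℝ} (hμ : μ ∈ spectrum ℝ (H.adjMatrix ℝ)) :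
    ∃ v, |μ| ≤ H.degree v := by
  obtain ⟨x, hx0, hx⟩ := Matrix.exists_mulVec_eq_smul_of_mem_spectrum_s12 hμ
  obtain ⟨j, hj⟩ := Function.ne_iff.1 hx0
  obtain ⟨v, -, hv⟩ := Finset.exists_max_image univ (fun u => |x u|) ⟨j, mem_univ j⟩
  have hxv : 0 < |x v| := (abs_pos.2 hj).trans_le (hv j (mem_univ j))
  refine ⟨v, le_of_mul_le_mul_right ?_ hxv⟩
  calc |μ| * |x v| = |∑ u ∈ H.neighborFinset v, x u| := by
        rw [← abs_mul, ← smul_eq_mul, ← Pi.smul_apply, ← hx, adjMatrix_mulVec_apply]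
    _ ≤ ∑ u ∈ H.neighborFinset v, |x u| := abs_sum_le_sum_abs _ _
    _ ≤ ∑ u ∈ H.neighborFinset v, |x v| := sum_le_sum fun u _ => hv u (mem_univ u)
    _ = H.degree v * |x v| := by rw [sum_const, card_neighborFinset_eq_degree, nsmul_eq_mul]

section CliqueGraph

variable {V : Type*} {G : SimpleGraph V} {ω : ℕ}

namespace IsCliqueRegular

lemma eq_of_mem_of_mem (hcr : IsCliqueRegular G ω) {s t : Finset V} (hs : G.IsNClique ω s)
    (ht : G.IsNClique ω t) {u v : V} (huv : u ≠ v) (hus : u ∈ s) (hvs : v ∈ s) (hut : u ∈ t)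
    (hvt : v ∈ t) : s = t := by
  obtain ⟨w, -, hw⟩ := hcr.2 (hs.1 (mem_coe.2 hus) (mem_coe.2 hvs) huv)
  rw [hw s ⟨hs, hus, hvs⟩, hw t ⟨ht, hut, hvt⟩]

lemma two_le (hcr : IsCliqueRegular G ω) : 2 ≤ ω := by
  obtain ⟨e, he⟩ := hcr.1
  induction e using Sym2.ind with
  | _ x y =>
    rw [mem_edgeSet] at he
    obtain ⟨s, ⟨hs, hx, hy⟩, -⟩ := hcr.2 he
    rw [← hs.2]
    exact one_lt_card.2 ⟨x, hx, y, hy, he.ne⟩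

lemma card_inter_le_one [DecidableEq V] (hcr : IsCliqueRegular G ω) {s t : Finset V}
    (hs : G.IsNClique ω s) (ht : G.IsNClique ω t) (hst : s ≠ t) : #(s ∩ t) ≤ 1 := by
  by_contra! h
  obtain ⟨u, hu, v, hv, huv⟩ := one_lt_card.1 h
  rw [mem_inter] at hu hv
  exact hst (hcr.eq_of_mem_of_mem hs ht huv hu.1 hv.1 hu.2 hv.2)

end IsCliqueRegular

variable [DecidableEq V] [Fintype V]

variable (G ω) in
def cliqueIncidence : Matrix {s : Finset V // G.IsNClique ω s} V ℝ :=
  of fun s v => if v ∈ s.val then 1 else 0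

lemma cliqueIncidence_mul_transpose_apply (s t : {s : Finset V // G.IsNClique ω s}) :
    (cliqueIncidence G ω * (cliqueIncidence G ω)ᵀ) s t = #(s.val ∩ t.val) := by
  simp only [cliqueIncidence, mul_apply, transpose_apply, of_apply, mul_ite, mul_one, mul_zero]
  simp_rw [← ite_and, ← mem_inter, sum_boole, filter_mem_eq_inter, univ_inter]
  rw [inter_comm]

lemma IsCliqueRegular.cliqueIncidence_mul_transpose (hcr : IsCliqueRegular G ω) :
    cliqueIncidence G ω * (cliqueIncidence G ω)ᵀ =
      (ω : Matrix _ _ ℝ) + (cliqueGraph G ω).adjMatrix ℝ := by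
  ext s t
  rw [cliqueIncidence_mul_transpose_apply, Matrix.add_apply, adjMatrix_apply]
  obtain rfl | hst := eq_or_ne s t
  · simp [s.2.2, Matrix.natCast_apply]
  have hinter : #(s.val ∩ t.val) = if (s.val ∩ t.val).Nonempty then 1 else 0 := by
    split_ifs with hne
    · exact le_antisymm (hcr.card_inter_le_one s.2 t.2 (Subtype.coe_ne_coe.2 hst)) hne.card_pos
    · simpa using hne
  simp [hinter, Matrix.natCast_apply, hst, cliqueGraph]

lemma IsCliqueRegular.posSemidef_natCast_add_adjMatrix (hcr : IsCliqueRegular G ω) :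
    ((ω : Matrix _ _ ℝ) + (cliqueGraph G ω).adjMatrix ℝ).PosSemidef := by
  rw [← hcr.cliqueIncidence_mul_transpose, ← conjTranspose_eq_transpose_of_trivial]
  exact posSemidef_self_mul_conjTranspose _

variable [DecidableRel G.Adj]

variable (G ω) in
def cliquesThrough (v : V) : Finset {s : Finset V // G.IsNClique ω s} :=
  univ.filter fun s => v ∈ s.val

@[simp]
lemma mem_cliquesThrough {v : V} {s : {s : Finset V // G.IsNClique ω s}} :
    s ∈ cliquesThrough G ω v ↔ v ∈ s.val := by
  simp [cliquesThrough]

lemma IsCliqueRegular.mul_card_cliquesThrough_le_degree (hcr : IsCliqueRegular G ω) (v : V) :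
    (ω - 1) * #(cliquesThrough G ω v) ≤ G.degree v := by
  have hdisj : Set.PairwiseDisjoint ↑(cliquesThrough G ω v)
      fun s : {s : Finset V // G.IsNClique ω s} => s.val.erase v := by
    intro s hs t ht hst
    refine disjoint_left.2 fun u hus hut => hst (Subtype.ext ?_)
    exact hcr.eq_of_mem_of_mem s.2 t.2 (mem_erase.1 hus).1 (mem_of_mem_erase hus)
      (mem_cliquesThrough.1 hs) (mem_of_mem_erase hut) (mem_cliquesThrough.1 ht)
  have hsub : (cliquesThrough G ω v).biUnion (fun s => s.val.erase v) ⊆ G.neighborFinset v := by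
    intro u hu
    obtain ⟨s, hs, hus⟩ := mem_biUnion.1 hu
    exact (mem_neighborFinset _ _ _).2 <| s.2.1 (mem_coe.2 (mem_cliquesThrough.1 hs))
      (mem_coe.2 (mem_of_mem_erase hus)) (mem_erase.1 hus).1.symm
  calc (ω - 1) * #(cliquesThrough G ω v)
      = ∑ s ∈ cliquesThrough G ω v, #(s.val.erase v) := by
        rw [sum_congr rfl fun s hs => by
          rw [card_erase_of_mem (mem_cliquesThrough.1 hs), s.2.2], sum_const, smul_eq_mul, mul_comm]
    _ = #((cliquesThrough G ω v).biUnion fun s => s.val.erase v) := (card_biUnion hdisj).symm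
    _ ≤ G.degree v := card_le_card hsub

lemma degree_cliqueGraph_le_sum (s : {s : Finset V // G.IsNClique ω s}) :
    (cliqueGraph G ω).degree s ≤ ∑ v ∈ s.val, #((cliquesThrough G ω v).erase s) := by
  refine (card_le_card fun t ht => ?_).trans card_biUnion_le
  obtain ⟨hst, w, hw⟩ := (mem_neighborFinset _ _ _).1 ht
  rw [mem_inter] at hw
  exact mem_biUnion.2 ⟨w, hw.1, mem_erase.2 ⟨hst.symm, mem_cliquesThrough.2 hw.2⟩⟩

lemma IsCliqueRegular.degree_cliqueGraph_le (hcr : IsCliqueRegular G ω)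
    (s : {s : Finset V // G.IsNClique ω s}) :
    ((cliqueGraph G ω).degree s : ℝ) ≤ ω * (G.maxDegree / (ω - 1 : ℝ) - 1) := by
  have hω : (1 : ℝ) < ω := by exact_mod_cast hcr.two_le
  have hthrough (v : V) : (#(cliquesThrough G ω v) : ℝ) ≤ G.maxDegree / (ω - 1 : ℝ) := by
    rw [le_div_iff₀ (by linarith), mul_comm]
    have := (hcr.mul_card_cliquesThrough_le_degree v).trans (G.degree_le_maxDegree v)
    rwa [← Nat.cast_le (α := ℝ), Nat.cast_mul, Nat.cast_sub (Nat.one_le_of_lt hcr.two_le),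
      Nat.cast_one] at this
  calc ((cliqueGraph G ω).degree s : ℝ)
      ≤ ∑ v ∈ s.val, (#((cliquesThrough G ω v).erase s) : ℝ) := by
        exact_mod_cast degree_cliqueGraph_le_sum s
    _ ≤ ∑ v ∈ s.val, (G.maxDegree / (ω - 1 : ℝ) - 1) := by
        refine sum_le_sum fun v hv => ?_
        rw [cast_card_erase_of_mem (mem_cliquesThrough.2 hv)]
        linarith [hthrough v]
    _ = ω * (G.maxDegree / (ω - 1 : ℝ) - 1) := by rw [sum_const, s.2.2, nsmul_eq_mul]

end CliqueGraph

/-- If `Γ` is `ω`-clique regular, every eigenvalue `λ` of `C_ω(Γ)` satisfies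
`−ω ≤ λ ≤ ω(Δ(Γ)/(ω−1) − 1)`. -/
theorem stmt12 {V : Type*} [Fintype V] [DecidableEq V] (G : SimpleGraph V)
    [DecidableRel G.Adj] (ω : ℕ) (hcr : IsCliqueRegular G ω) :
    ∀ lam ∈ spectrum ℝ ((cliqueGraph G ω).adjMatrix ℝ),
      -(ω : ℝ) ≤ lam ∧
        lam ≤ (ω : ℝ) * ((G.maxDegree : ℝ) / ((ω : ℝ) - 1) - 1) := by
  intro lam hlam
  refine ⟨neg_le_of_posSemidef_algebraMap_add ?_ hlam, ?_⟩
  · simpa only [map_natCast] using hcr.posSemidef_natCast_add_adjMatrix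
  · obtain ⟨s, hs⟩ := (cliqueGraph G ω).exists_abs_le_degree_of_mem_spectrum hlam
    exact (le_abs_self lam).trans (hs.trans (hcr.degree_cliqueGraph_le s))
end

section
/- Let Γ be an srg(n,k,1,μ) regular clique assembly, let C_3(Γ) be its triangle graph, and fix a vertex v of C_3(Γ). Then there is no edge of C_3(Γ) between a vertex having 0 common neighbors with v and a vertex having 3 common neighbors with v (both non-adjacent to v). -/
/-!
Let `a` and `b` be adjacent triangles meeting in `x`; as `a` is not adjacent to `v`, `b ≠ v`,
so `b` is disjoint from `v`. A common neighbour `t` of `v` and `b` cannot contain `x`, for then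
it would be a common neighbour of `v` and `a`; so it meets `b` in one of the two other points
of `b`. A point outside `v` lies on at most one triangle meeting `v`: two such triangles
through `y`, meeting `v` in `z₁ ≠ z₂`, would make `{z₁, z₂, y}` a second triangle on the edge
`z₁z₂` of `v`. Hence `v` and `b` have at most two common neighbours.
-/

open SimpleGraph

namespace IsCliqueRegular

variable {V : Type*} {G : SimpleGraph V}

theorem eq_of_adj {ω : ℕ} (hcr : IsCliqueRegular G ω) {x y : V} (hxy : G.Adj x y)
    {s t : Finset V} (hs : G.IsNClique ω s) (hxs : x ∈ s) (hys : y ∈ s)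
    (ht : G.IsNClique ω t) (hxt : x ∈ t) (hyt : y ∈ t) : s = t :=
  (hcr.2 hxy).unique ⟨hs, hxs, hys⟩ ⟨ht, hxt, hyt⟩

variable [DecidableEq V]

theorem eq_of_mem_of_inter_nonempty (hcr : IsCliqueRegular G 3) {s t₁ t₂ : Finset V}
    (hs : G.IsNClique 3 s) (ht₁ : G.IsNClique 3 t₁) (ht₂ : G.IsNClique 3 t₂) {y : V}
    (hy₁ : y ∈ t₁) (hy₂ : y ∈ t₂) (hys : y ∉ s)
    (hst₁ : (s ∩ t₁).Nonempty) (hst₂ : (s ∩ t₂).Nonempty) : t₁ = t₂ := by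
  obtain ⟨z₁, hz₁⟩ := hst₁
  obtain ⟨z₂, hz₂⟩ := hst₂
  obtain ⟨hz₁s, hz₁t⟩ := Finset.mem_inter.1 hz₁
  obtain ⟨hz₂s, hz₂t⟩ := Finset.mem_inter.1 hz₂
  have hyz₁ : G.Adj y z₁ := ht₁.1 hy₁ hz₁t (ne_of_mem_of_not_mem hz₁s hys).symm
  have hyz₂ : G.Adj y z₂ := ht₂.1 hy₂ hz₂t (ne_of_mem_of_not_mem hz₂s hys).symm
  by_cases hz : z₁ = z₂
  · subst hz
    exact hcr.eq_of_adj hyz₁ ht₁ hy₁ hz₁t ht₂ hy₂ hz₂t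
  · have hz₁₂ : G.Adj z₁ z₂ := hs.1 hz₁s hz₂s hz
    have hzzy : G.IsNClique 3 {z₁, z₂, y} :=
      is3Clique_triple_iff.2 ⟨hz₁₂, hyz₁.symm, hyz₂.symm⟩
    have hs_eq : ({z₁, z₂, y} : Finset V) = s :=
      hcr.eq_of_adj hz₁₂ hzzy (by simp) (by simp) hs hz₁s hz₂s
    exact absurd (hs_eq ▸ by simp) hys

theorem ncard_le_card_of_forall_inter_nonempty (hcr : IsCliqueRegular G 3) {s : Finset V}
    (hs : G.IsNClique 3 s) {Y : Finset V} (hY : Disjoint s Y)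
    {T : Set {t : Finset V // G.IsNClique 3 t}}
    (hT : ∀ t ∈ T, (s ∩ t.val).Nonempty ∧ (t.val ∩ Y).Nonempty) : T.ncard ≤ Y.card := by
  rcases T.finite_or_infinite with hfin | hinf
  · rw [Set.ncard_eq_toFinset_card T hfin]
    refine Finset.card_le_card_of_forall_subsingleton (fun t y => y ∈ t.val)
      (fun t ht => ?_) (fun y hy => ?_)
    · obtain ⟨y, hy⟩ := (hT t (by simpa using ht)).2
      exact ⟨y, (Finset.mem_inter.1 hy).2, (Finset.mem_inter.1 hy).1⟩
    · rintro t₁ ⟨ht₁, hy₁⟩ t₂ ⟨ht₂, hy₂⟩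
      rw [Set.Finite.mem_toFinset] at ht₁ ht₂
      exact Subtype.ext <| hcr.eq_of_mem_of_inter_nonempty hs t₁.prop t₂.prop hy₁ hy₂
        (Finset.disjoint_right.1 hY hy) (hT _ ht₁).1 (hT _ ht₂).1
  · simp [hinf.ncard]

end IsCliqueRegular

theorem stmt17_general {V : Type*} [Fintype V] [DecidableEq V] (G : SimpleGraph V)
    (hcr : IsCliqueRegular G 3)
    (v a b : {s : Finset V // G.IsNClique 3 s})
    (hanadj : ¬ (cliqueGraph G 3).Adj v a)
    (hbnadj : ¬ (cliqueGraph G 3).Adj v b)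
    (ha0 : ((cliqueGraph G 3).neighborSet v ∩ (cliqueGraph G 3).neighborSet a).ncard = 0)
    (hb3 : ((cliqueGraph G 3).neighborSet v ∩ (cliqueGraph G 3).neighborSet b).ncard = 3) :
    ¬ (cliqueGraph G 3).Adj a b := by
  intro hab
  obtain ⟨x, hx⟩ := hab.2
  obtain ⟨hxa, hxb⟩ := Finset.mem_inter.1 hx
  have hbv : b ≠ v := by
    rintro rfl
    exact hanadj hab.symm
  have hvb : Disjoint v.val b.val := by
    rw [Finset.disjoint_iff_inter_eq_empty, ← Finset.not_nonempty_iff_eq_empty]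
    exact fun h => hbnadj ⟨hbv.symm, h⟩
  have hxv : ∀ t ∈ (cliqueGraph G 3).neighborSet v, x ∉ t.val := by
    intro t hvt hxt
    have hta : a ≠ t := by
      rintro rfl
      exact hanadj hvt
    have ht : t ∈ (cliqueGraph G 3).neighborSet v ∩ (cliqueGraph G 3).neighborSet a :=
      ⟨hvt, hta, x, Finset.mem_inter.2 ⟨hxa, hxt⟩⟩
    rwa [(Set.ncard_eq_zero (Set.toFinite _)).1 ha0] at ht
  have hle := hcr.ncard_le_card_of_forall_inter_nonempty v.prop
    (hvb.mono_right (Finset.erase_subset x b.val))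
    (T := (cliqueGraph G 3).neighborSet v ∩ (cliqueGraph G 3).neighborSet b)
    fun t ⟨hvt, hbt⟩ => by
      obtain ⟨y, hy⟩ := hbt.2
      obtain ⟨hyb, hyt⟩ := Finset.mem_inter.1 hy
      exact ⟨hvt.2, y, Finset.mem_inter.2
        ⟨hyt, Finset.mem_erase.2 ⟨ne_of_mem_of_not_mem hyt (hxv t hvt), hyb⟩⟩⟩
  rw [hb3, Finset.card_erase_of_mem hxb, b.prop.card_eq] at hle
  omega

/-- For an `srg(n,k,1,μ)` (a regular clique assembly) and a fixed vertex `v` of the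
triangle graph `C₃(Γ)`, there is no edge between a vertex (non-adjacent to `v`) having
`0` common neighbors with `v` and one having `3` common neighbors with `v`. -/
theorem stmt17 {V : Type*} [Fintype V] [DecidableEq V] (G : SimpleGraph V)
    [DecidableRel G.Adj] (n k μ : ℕ)
    (hsrg : G.IsSRGWith n k 1 μ)
    (hcr : IsCliqueRegular G 3)
    (v a b : {s : Finset V // G.IsNClique 3 s})
    (hav : a ≠ v) (hbv : b ≠ v)
    (hanadj : ¬ (cliqueGraph G 3).Adj v a)
    (hbnadj : ¬ (cliqueGraph G 3).Adj v b)
    (ha0 : ((cliqueGraph G 3).neighborSet v ∩ (cliqueGraph G 3).neighborSet a).ncard = 0)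
    (hb3 : ((cliqueGraph G 3).neighborSet v ∩ (cliqueGraph G 3).neighborSet b).ncard = 3) :
    ¬ (cliqueGraph G 3).Adj a b :=
  stmt17_general G hcr v a b hanadj hbnadj ha0 hb3
end
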